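/- Intuitionistic propositional logic IPC has the propositional disjunctive interpolation property: for any IPC-provable formula φ → ψ ∨ θ, there exist formulas I and J whose variables are contained in the variables of φ, such that φ → (I ∨ J), I → ψ, and J → θ are all provable in IPC. Moreover, if φ is monotone (built from atoms, ⊤, ⊥, ∧, ∨ only), then I and J can be chosen monotone. -/

import Mathlib

/-! ## Basic machinery: strings, polynomial time, NP, circuits, formulas -/

/-- The trivial finite encoding of binary strings over the alphabet `Bool`. -/
def listBoolEncoding : Computability.Encoding (List Bool) Bool where
  encode := id
  decode := fun l => some l
  decode_encode := fun _ => rfl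

/-- A function on binary strings is polynomial-time computable if some
two-stack Turing machine computes it in polynomial time. -/
def PolyTimeComputable (f : List Bool → List Bool) : Prop :=
  Nonempty (Turing.TM2ComputableInPolyTime listBoolEncoding.encode listBoolEncoding.encode f)

/-- An injective pairing of binary strings. -/
def pairEnc (u w : List Bool) : List Bool :=
  (u.map fun b => [true, b]).flatten ++ false :: w

/-- A predicate on binary strings is polynomial-time decidable. -/
def PolyTimeDecidable (P : List Bool → Prop) : Prop :=
  ∃ f, PolyTimeComputable f ∧ ∀ w, P w ↔ f w = [true]

/-- A binary predicate on binary strings is polynomial-time decidable. -/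
def PolyTimeDecidable2 (P : List Bool → List Bool → Prop) : Prop :=
  ∃ f, PolyTimeComputable f ∧ ∀ u w, P u w ↔ f (pairEnc u w) = [true]

/-- `L ∈ NP`: there are a polynomial-time decidable binary predicate `R` and a
polynomial `p` with `w ∈ L` iff some witness `u` with `|u| ≤ p (|w|)` satisfies `R u w`. -/
def InNP (L : Set (List Bool)) : Prop :=
  ∃ (R : List Bool → List Bool → Prop) (p : Polynomial ℕ),
    PolyTimeDecidable2 R ∧ ∀ w, w ∈ L ↔ ∃ u, u.length ≤ p.eval w.length ∧ R u w

/-- `L ∈ P`. -/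
def InP (L : Set (List Bool)) : Prop := PolyTimeDecidable (· ∈ L)

/-- A gate of a Boolean circuit with `s` gates: a constant, an input gate reading
input variable `a : ℕ`, or a negation/conjunction/disjunction of earlier gates. -/
inductive CGate (s : ℕ) : Type where
  | const : Bool → CGate s
  | input : ℕ → CGate s
  | not : Fin s → CGate s
  | and : Fin s → Fin s → CGate s
  | or : Fin s → Fin s → CGate s

/-- The gates referenced by a gate. -/
def CGate.deps {s : ℕ} : CGate s → List (Fin s)
  | .const _ => []
  | .input _ => []
  | .not j => [j]
  | .and j k => [j, k]
  | .or j k => [j, k]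

/-- A Boolean circuit (as a DAG of gates, without a chosen output). -/
structure CircuitBase where
  size : ℕ
  gates : Fin size → CGate size
  wf : ∀ i : Fin size, ∀ j ∈ (gates i).deps, (j : ℕ) < (i : ℕ)

/-- Evaluate gate `i` of a circuit under an assignment `v` to the input variables. -/
def CircuitBase.evalGate (c : CircuitBase) (v : ℕ → Bool) (i : Fin c.size) : Bool :=
  match h : c.gates i with
  | .const b => b
  | .input a => v a
  | .not j => !(c.evalGate v j)
  | .and j k => c.evalGate v j && c.evalGate v k
  | .or j k => c.evalGate v j || c.evalGate v k
termination_by (i : ℕ)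
decreasing_by
  · exact c.wf i j (by rw [h]; simp [CGate.deps])
  · exact c.wf i j (by rw [h]; simp [CGate.deps])
  · exact c.wf i k (by rw [h]; simp [CGate.deps])
  · exact c.wf i j (by rw [h]; simp [CGate.deps])
  · exact c.wf i k (by rw [h]; simp [CGate.deps])

/-- The circuit reads only input variables from `S`. -/
def CircuitBase.InputsIn (c : CircuitBase) (S : Set ℕ) : Prop :=
  ∀ (i : Fin c.size) (a : ℕ), c.gates i = CGate.input a → a ∈ S

/-- A monotone circuit: no negation gates. -/
def CircuitBase.MonotoneC (c : CircuitBase) : Prop :=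
  ∀ (i j : Fin c.size), c.gates i ≠ CGate.not j

/-- A single-output Boolean circuit. -/
structure Circuit extends CircuitBase where
  out : Fin size

/-- Evaluate a circuit on an assignment to the input variables. -/
def Circuit.eval (c : Circuit) (v : ℕ → Bool) : Bool :=
  c.toCircuitBase.evalGate v c.out

/-- A multi-output Boolean circuit. -/
structure MultiCircuit extends CircuitBase where
  outs : List (Fin size)

/-- Evaluate a multi-output circuit on an assignment to the input variables. -/
def MultiCircuit.eval (c : MultiCircuit) (v : ℕ → Bool) : List Bool :=
  c.outs.map (c.toCircuitBase.evalGate v)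

/-- `pad_m(w) = 1w₁1w₂…1w_l 0…0` of total length `2m`. -/
def padBits (m : ℕ) (w : List Bool) : List Bool :=
  (w.map fun b => [true, b]).flatten ++ List.replicate (2 * m - 2 * w.length) false

/-- A function on binary strings is computable by polynomial-size circuits:
a family `Cₙ` of multi-output circuits of size polynomial in `n`, where
`Cₙ` reads input bits `0,…,n-1` and outputs the padded value of `f` on
every input of length `n`. -/
def PolySizeComputable (f : List Bool → List Bool) : Prop :=
  ∃ (C : ℕ → MultiCircuit) (outLen : ℕ → ℕ) (p : Polynomial ℕ),
    ∀ n, (C n).size ≤ p.eval n ∧ (C n).toCircuitBase.InputsIn {a | a < n} ∧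
      ∀ w : List Bool, w.length = n →
        (f w).length ≤ outLen n ∧
        (C n).eval (fun a => w.getD a false) = padBits (outLen n) (f w)

/-- `L ∈ P/poly`: a polynomial-size circuit family decides membership in `L`. -/
def InPPoly (L : Set (List Bool)) : Prop :=
  ∃ (C : ℕ → Circuit) (p : Polynomial ℕ),
    ∀ n, (C n).size ≤ p.eval n ∧ (C n).toCircuitBase.InputsIn {a | a < n} ∧
      ∀ w : List Bool, w.length = n →
        (w ∈ L ↔ (C n).eval (fun a => w.getD a false) = true)

/-- A proof system for a language `L`: a polynomial-time decidable binary relation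
`Pr` such that `w ∈ L` iff `w` has a `Pr`-proof. -/
def IsProofSystem (Pr : List Bool → List Bool → Prop) (L : Set (List Bool)) : Prop :=
  PolyTimeDecidable2 Pr ∧ ∀ w, w ∈ L ↔ ∃ u, Pr u w

/-- A proof system is polynomially bounded if every member of `L` has a proof of
size polynomial in its length. -/
def PolyBounded (Pr : List Bool → List Bool → Prop) (L : Set (List Bool)) : Prop :=
  ∃ p : Polynomial ℕ, ∀ w ∈ L, ∃ u, Pr u w ∧ u.length ≤ p.eval w.length

/-- One-way protocols. -/
structure OneWayProtocol where
  /-- the polynomial-time decidable predicate of source data -/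
  Pred : List Bool → Prop
  /-- the public transformation -/
  h : List Bool → List Bool
  /-- the derived secret information -/
  k : List Bool → List Bool
  /-- computes (in unary) the length of `k u` from `h u` -/
  lenFun : List Bool → List Bool
  /-- the bounding polynomial -/
  bnd : Polynomial ℕ
  pred_dec : PolyTimeDecidable Pred
  h_poly : PolyTimeComputable h
  k_poly : PolyTimeComputable k
  lenFun_poly : PolyTimeComputable lenFun
  /-- semi-injectivity -/
  semi_inj : ∀ u₁ u₂, Pred u₁ → Pred u₂ → h u₁ = h u₂ → k u₁ = k u₂
  /-- `|k u|` is polynomial-time computable from `h u` -/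
  len_eq : ∀ u, (k u).length = (lenFun (h u)).length
  /-- boundedness: `|u| ≤ bnd (|h u|)` -/
  bounded : ∀ u, u.length ≤ bnd.eval (h u).length
  /-- security against `P/poly` adversaries -/
  secure : ¬ ∃ f : List Bool → List Bool, PolySizeComputable f ∧ ∀ u, k u = f (h u)

/-! ## Propositional formulas -/

/-- Propositional formulas over `{⊤, ⊥, ∧, ∨, →}` with variables indexed by `ℕ`. -/
inductive PropForm : Type where
  | tr : PropForm
  | fls : PropForm
  | var : ℕ → PropForm
  | and : PropForm → PropForm → PropForm
  | or : PropForm → PropForm → PropForm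
  | imp : PropForm → PropForm → PropForm
deriving DecidableEq

/-- Negation abbreviates `φ → ⊥`. -/
def PropForm.neg (φ : PropForm) : PropForm := φ.imp .fls

/-- Classical Boolean evaluation of a formula. -/
def PropForm.eval (v : ℕ → Bool) : PropForm → Bool
  | .tr => true
  | .fls => false
  | .var a => v a
  | .and φ ψ => φ.eval v && ψ.eval v
  | .or φ ψ => φ.eval v || ψ.eval v
  | .imp φ ψ => !(φ.eval v) || ψ.eval v

/-- A classical tautology. -/
def PropForm.Taut (φ : PropForm) : Prop := ∀ v, φ.eval v = true

/-- The variables occurring in a formula. -/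
def PropForm.vars : PropForm → Finset ℕ
  | .tr => ∅
  | .fls => ∅
  | .var a => {a}
  | .and φ ψ => φ.vars ∪ ψ.vars
  | .or φ ψ => φ.vars ∪ ψ.vars
  | .imp φ ψ => φ.vars ∪ ψ.vars

/-- The size of a formula. -/
def PropForm.size : PropForm → ℕ
  | .tr => 1
  | .fls => 1
  | .var _ => 1
  | .and φ ψ => φ.size + ψ.size + 1
  | .or φ ψ => φ.size + ψ.size + 1
  | .imp φ ψ => φ.size + ψ.size + 1

/-- Substitution of formulas for variables. -/
def PropForm.subst (σ : ℕ → PropForm) : PropForm → PropForm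
  | .tr => .tr
  | .fls => .fls
  | .var a => σ a
  | .and φ ψ => .and (φ.subst σ) (ψ.subst σ)
  | .or φ ψ => .or (φ.subst σ) (ψ.subst σ)
  | .imp φ ψ => .imp (φ.subst σ) (ψ.subst σ)

/-- A monotone formula: built from atoms, `⊤`, `⊥`, `∧`, `∨` only (no implication). -/
def PropForm.IsMonotone : PropForm → Prop
  | .tr => True
  | .fls => True
  | .var _ => True
  | .and φ ψ => φ.IsMonotone ∧ ψ.IsMonotone
  | .or φ ψ => φ.IsMonotone ∧ ψ.IsMonotone
  | .imp _ _ => False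

/-- `MonoIn P b φ` holds if every occurrence in `φ` of a variable from `P` has
polarity allowed by `b` (`b = true`: positive occurrences only are constrained;
a variable of `P` may occur with polarity `b` but not opposite).
`MonoIn P true φ` says `φ` is monotone in the variables of `P`
(no negated occurrence of a `P`-variable in negation normal form). -/
def MonoIn (P : Finset ℕ) : Bool → PropForm → Prop
  | _, .tr => True
  | _, .fls => True
  | b, .var a => b = true ∨ a ∉ P
  | b, .and φ ψ => MonoIn P b φ ∧ MonoIn P b ψ
  | b, .or φ ψ => MonoIn P b φ ∧ MonoIn P b ψ
  | b, .imp φ ψ => MonoIn P (!b) φ ∧ MonoIn P b ψ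

/-- Conjunction of a list of formulas. -/
def conjList (Γ : List PropForm) : PropForm := Γ.foldr PropForm.and .tr

/-- Disjunction of a list of formulas. -/
def disjList (Δ : List PropForm) : PropForm := Δ.foldr PropForm.or .fls

/-- `⋀_{i<m} (pᵢ ∨ ¬pᵢ)`. -/
def excludedMiddleConj (m : ℕ) : PropForm :=
  conjList ((List.range m).map fun i => (PropForm.var i).or (PropForm.var i).neg)

/-- Hilbert-style provability in intuitionistic propositional logic `IPC`. -/
inductive IPC : PropForm → Prop
  | mp {φ ψ : PropForm} : IPC (φ.imp ψ) → IPC φ → IPC ψ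
  | ax1 (φ ψ : PropForm) : IPC (φ.imp (ψ.imp φ))
  | ax2 (φ ψ χ : PropForm) : IPC ((φ.imp (ψ.imp χ)).imp ((φ.imp ψ).imp (φ.imp χ)))
  | axAndI (φ ψ : PropForm) : IPC (φ.imp (ψ.imp (φ.and ψ)))
  | axAndL (φ ψ : PropForm) : IPC ((φ.and ψ).imp φ)
  | axAndR (φ ψ : PropForm) : IPC ((φ.and ψ).imp ψ)
  | axOrL (φ ψ : PropForm) : IPC (φ.imp (φ.or ψ))
  | axOrR (φ ψ : PropForm) : IPC (ψ.imp (φ.or ψ))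
  | axOrE (φ ψ χ : PropForm) : IPC ((φ.imp χ).imp ((ψ.imp χ).imp ((φ.or ψ).imp χ)))
  | axFls (φ : PropForm) : IPC (PropForm.fls.imp φ)
  | axTr : IPC .tr

/-- Unary encoding of a natural number as a binary string. -/
def natBits (n : ℕ) : List Bool := List.replicate n true ++ [false]

/-- An encoding of propositional formulas as binary strings. -/
def PropForm.encode : PropForm → List Bool
  | .tr => [false, false, false]
  | .fls => [false, false, true]
  | .var a => [false, true] ++ natBits a
  | .and φ ψ => [true, false, false] ++ φ.encode ++ ψ.encode
  | .or φ ψ => [true, false, true] ++ φ.encode ++ ψ.encode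
  | .imp φ ψ => [true, true] ++ φ.encode ++ ψ.encode

/-- The language of (codes of) classical propositional tautologies. -/
def CPClang : Set (List Bool) := {w | ∃ φ : PropForm, φ.Taut ∧ w = φ.encode}

/-- The formula computed by a circuit (unfolding the DAG into a tree). -/
def CircuitBase.gateForm (c : CircuitBase) (i : Fin c.size) : PropForm :=
  match h : c.gates i with
  | .const b => if b then .tr else .fls
  | .input a => .var a
  | .not j => (c.gateForm j).neg
  | .and j k => (c.gateForm j).and (c.gateForm k)
  | .or j k => (c.gateForm j).or (c.gateForm k)
termination_by (i : ℕ)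
decreasing_by
  · exact c.wf i j (by rw [h]; simp [CGate.deps])
  · exact c.wf i j (by rw [h]; simp [CGate.deps])
  · exact c.wf i k (by rw [h]; simp [CGate.deps])
  · exact c.wf i j (by rw [h]; simp [CGate.deps])
  · exact c.wf i k (by rw [h]; simp [CGate.deps])

/-- The formula `[C]` of a single-output circuit `C`. -/
def Circuit.toForm (c : Circuit) : PropForm := c.toCircuitBase.gateForm c.out

/-- `[C]` is a Craig interpolant for `φ → ψ`: `C` reads only the shared
variables, and for every assignment `v`, `φ(v) = 1` implies `C(v) = 1`, and
`C(v) = 1` implies `ψ(v) = 1`. -/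
def Interpolates (C : Circuit) (φ ψ : PropForm) : Prop :=
  C.toCircuitBase.InputsIn {a | a ∈ φ.vars ∩ ψ.vars} ∧
  ∀ v : ℕ → Bool, (φ.eval v = true → C.eval v = true) ∧ (C.eval v = true → ψ.eval v = true)

/-- Feasible interpolation of a proof system for `CPC`: from any proof of an
implication one obtains an interpolating circuit of polynomial size. -/
def FeasibleInterpolation (Pr : List Bool → List Bool → Prop) : Prop :=
  ∃ s : Polynomial ℕ, ∀ (φ ψ : PropForm) (u : List Bool),
    Pr u (φ.imp ψ).encode →
    ∃ C : Circuit,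
      C.size ≤ s.eval (u.length + (φ.imp ψ).encode.length) ∧ Interpolates C φ ψ

/-! ## Horn formulas -/

/-- A conjunction of atoms. -/
inductive AtomConj : PropForm → Prop
  | var (a : ℕ) : AtomConj (.var a)
  | and {φ ψ : PropForm} : AtomConj φ → AtomConj ψ → AtomConj (φ.and ψ)

/-- An implicational Horn formula: an atom, or `(p₁ ∧ … ∧ p_k) → r` with all
`pᵢ` and `r` atoms. -/
inductive IsHorn : PropForm → Prop
  | atom (a : ℕ) : IsHorn (.var a)
  | imp {φ : PropForm} (r : ℕ) : AtomConj φ → IsHorn (φ.imp (.var r))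

/-! ## Modal formulas -/

/-- Modal propositional formulas. -/
inductive ModalForm : Type where
  | tr : ModalForm
  | fls : ModalForm
  | var : ℕ → ModalForm
  | and : ModalForm → ModalForm → ModalForm
  | or : ModalForm → ModalForm → ModalForm
  | imp : ModalForm → ModalForm → ModalForm
  | box : ModalForm → ModalForm
deriving DecidableEq

/-- Modal negation. -/
def ModalForm.neg (φ : ModalForm) : ModalForm := φ.imp .fls

/-- Substitution for modal formulas. -/
def ModalForm.subst (σ : ℕ → ModalForm) : ModalForm → ModalForm
  | .tr => .tr
  | .fls => .fls
  | .var a => σ a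
  | .and φ ψ => .and (φ.subst σ) (ψ.subst σ)
  | .or φ ψ => .or (φ.subst σ) (ψ.subst σ)
  | .imp φ ψ => .imp (φ.subst σ) (ψ.subst σ)
  | .box φ => .box (φ.subst σ)

/-- The forgetful translation (`□φ ↦ φ`). -/
def ModalForm.forget : ModalForm → PropForm
  | .tr => .tr
  | .fls => .fls
  | .var a => .var a
  | .and φ ψ => .and φ.forget ψ.forget
  | .or φ ψ => .or φ.forget ψ.forget
  | .imp φ ψ => .imp φ.forget ψ.forget
  | .box φ => φ.forget

/-- The collapse translation (`□φ ↦ ⊤`). -/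
def ModalForm.collapse : ModalForm → PropForm
  | .tr => .tr
  | .fls => .fls
  | .var a => .var a
  | .and φ ψ => .and φ.collapse ψ.collapse
  | .or φ ψ => .or φ.collapse ψ.collapse
  | .imp φ ψ => .imp φ.collapse ψ.collapse
  | .box _ => .tr

/-- Hilbert-style provability in the normal modal logic `K` extended by the
axioms in `Ax` (closed under substitution): a classical propositional base,
the distribution axiom, modus ponens, necessitation and substitution. -/
inductive KExt (Ax : Set ModalForm) : ModalForm → Prop
  | axiom' {φ : ModalForm} : φ ∈ Ax → KExt Ax φ
  | mp {φ ψ : ModalForm} : KExt Ax (φ.imp ψ) → KExt Ax φ → KExt Ax ψ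
  | nec {φ : ModalForm} : KExt Ax φ → KExt Ax φ.box
  | subst {φ : ModalForm} (σ : ℕ → ModalForm) : KExt Ax φ → KExt Ax (φ.subst σ)
  | ax1 (φ ψ : ModalForm) : KExt Ax (φ.imp (ψ.imp φ))
  | ax2 (φ ψ χ : ModalForm) : KExt Ax ((φ.imp (ψ.imp χ)).imp ((φ.imp ψ).imp (φ.imp χ)))
  | axAndI (φ ψ : ModalForm) : KExt Ax (φ.imp (ψ.imp (φ.and ψ)))
  | axAndL (φ ψ : ModalForm) : KExt Ax ((φ.and ψ).imp φ)
  | axAndR (φ ψ : ModalForm) : KExt Ax ((φ.and ψ).imp ψ)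
  | axOrL (φ ψ : ModalForm) : KExt Ax (φ.imp (φ.or ψ))
  | axOrR (φ ψ : ModalForm) : KExt Ax (ψ.imp (φ.or ψ))
  | axOrE (φ ψ χ : ModalForm) : KExt Ax ((φ.imp χ).imp ((ψ.imp χ).imp ((φ.or ψ).imp χ)))
  | axFls (φ : ModalForm) : KExt Ax (ModalForm.fls.imp φ)
  | axTr : KExt Ax .tr
  | axDNE (φ : ModalForm) : KExt Ax (φ.neg.neg.imp φ)
  | axK (φ ψ : ModalForm) : KExt Ax (((φ.imp ψ).box).imp (φ.box.imp ψ.box))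

/-- Provability in the basic modal logic `K`. -/
def KProof : ModalForm → Prop := KExt ∅

/-! ## Automatability -/

/-- A proof system for `CPC` is substitutable: substituting constants for some
of the variables transforms proofs with polynomial overhead. -/
def Substitutable (Pr : List Bool → List Bool → Prop) : Prop :=
  ∃ l : Polynomial ℕ, ∀ (φ : PropForm) (σ : ℕ → PropForm) (u : List Bool),
    (∀ a, σ a = .var a ∨ σ a = .tr ∨ σ a = .fls) →
    Pr u φ.encode →
    ∃ u', Pr u' (φ.subst σ).encode ∧ u'.length ≤ l.eval (u.length + φ.encode.length)

/-- Closure under variable-free modus ponens: from a proof of `φ → ψ` with `φ` a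
variable-free tautology one obtains a proof of `ψ` with polynomial overhead. -/
def ClosedUnderVarFreeMP (Pr : List Bool → List Bool → Prop) : Prop :=
  ∃ m : Polynomial ℕ, ∀ (φ ψ : PropForm) (u : List Bool),
    φ.vars = ∅ → φ.Taut → Pr u (φ.imp ψ).encode →
    ∃ u', Pr u' ψ.encode ∧ u'.length ≤ m.eval (u.length + (φ.imp ψ).encode.length)

/-- Automatability (padded formulation): a polynomial-time algorithm which, given a
formula `φ` together with (in unary) any bound `b` on the size of some `Pr`-proof of
`φ`, outputs a `Pr`-proof of `φ`; its running time is thus polynomial in `|φ|` and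
the size of the shortest proof of `φ`. -/
def Automatable (Pr : List Bool → List Bool → Prop) : Prop :=
  ∃ A : List Bool → List Bool, PolyTimeComputable A ∧
    ∀ (φ : PropForm) (b : ℕ),
      (∃ u, Pr u φ.encode ∧ u.length ≤ b) →
      Pr (A (pairEnc φ.encode (List.replicate b true))) φ.encode

/-! ## Frege systems -/

/-- An inference rule: finitely many premises and a conclusion. -/
structure FregeRule : Type where
  prems : List PropForm
  concl : PropForm

/-- `π` is a derivation from assumptions `Γ` in the inference system `F`: every
line is an assumption or follows from earlier lines by a substitution instance
of a rule of `F`. -/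
def IsDerivation (F : List FregeRule) (Γ : List PropForm) (π : List PropForm) : Prop :=
  ∀ (i : ℕ) (hi : i < π.length),
    π.get ⟨i, hi⟩ ∈ Γ ∨
    ∃ R ∈ F, ∃ σ : ℕ → PropForm,
      π.get ⟨i, hi⟩ = R.concl.subst σ ∧
      ∀ p ∈ R.prems, ∃ (j : ℕ) (hj : j < π.length), j < i ∧ π.get ⟨j, hj⟩ = p.subst σ

/-- `φ` is derivable from `Γ` in the inference system `F`. -/
def FregeProves (F : List FregeRule) (Γ : List PropForm) (φ : PropForm) : Prop :=
  ∃ π : List PropForm, IsDerivation F Γ π ∧ φ ∈ π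

/-- The size of a derivation: the total size of its formulas. -/
def derivSize (π : List PropForm) : ℕ := (π.map PropForm.size).sum

/-! ## Graphs encoded as binary strings -/

/-- Adjacency in the graph on `n` vertices encoded by a binary string of length
`n(n-1)/2` (the entry for the pair `{i, j}` with `i < j` is at position
`j(j-1)/2 + i`). -/
def adjOf (w : List Bool) (i j : ℕ) : Bool :=
  if i < j then w.getD (j * (j - 1) / 2 + i) false
  else if j < i then w.getD (i * (i - 1) / 2 + j) false
  else false

/-- The graph encoded by `w` (on `n` vertices) contains a `k`-clique. -/
def HasClique (w : List Bool) (n k : ℕ) : Prop :=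
  ∃ f : Fin k → Fin n, Function.Injective f ∧
    ∀ a b : Fin k, a ≠ b → adjOf w (f a) (f b) = true

/-- The graph encoded by `w` (on `n` vertices) has a proper `l`-coloring. -/
def HasColoring (w : List Bool) (n l : ℕ) : Prop :=
  ∃ c : Fin n → Fin l, ∀ i j : Fin n, adjOf w (i : ℕ) (j : ℕ) = true → c i ≠ c j

/-- The language of graphs (on `n ≥ n₀` vertices) containing a `K(n)`-clique. -/
def CliqueLang (n₀ : ℕ) (K : ℕ → ℕ) : Set (List Bool) :=
  {w | ∃ n, n₀ ≤ n ∧ w.length = n * (n - 1) / 2 ∧ HasClique w n (K n)}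

/-- The language of graphs (on `n ≥ n₀` vertices) that are `L(n)`-colorable. -/
def ColorLang (n₀ : ℕ) (L : ℕ → ℕ) : Set (List Bool) :=
  {w | ∃ n, n₀ ≤ n ∧ w.length = n * (n - 1) / 2 ∧ HasColoring w n (L n)}

/-! ## Substitutions used for the intuitionistic translations -/

/-- The substitution replacing `pᵢ` (`i < m`) by `¬pᵢ`. -/
def negSubst (m : ℕ) : ℕ → PropForm :=
  fun a => if a < m then (PropForm.var a).neg else PropForm.var a

/-- The substitution replacing `pᵢ` (`i < m`) by the fresh variable `q_i := p_{m+i}`. -/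
def shiftSubst (m : ℕ) : ℕ → PropForm :=
  fun a => if a < m then PropForm.var (m + a) else PropForm.var a

/-- `⋀_{i<m} (pᵢ ∨ qᵢ)` where `qᵢ := p_{m+i}`. -/
def pairDisjConj (m : ℕ) : PropForm :=
  conjList ((List.range m).map fun i => (PropForm.var i).or (PropForm.var (m + i)))

/-!
Cut elimination turns `⊢ φ → ψ ∨ θ` into a cut-free derivation of `φ ⇒ ψ ∨ θ`, and the
interpolants are read off it by induction. If the last rule is a right `∨`-rule, the conjunction
of the context is one interpolant and `⊥` the other. Left `∧`- and `→`-rules pass the interpolants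
of their (right) premise down unchanged, and a left `∨`-rule joins the interpolants of its two
premises by `∨`. So the interpolants are built from `⊥`, `∨` and conjunctions of subformulas of
`φ`: they use only variables of `φ`, and when `φ` has no implication neither do they (and the
left `→`-rule never occurs).

Cut admissibility is proved by induction on the cut formula and then on the left premise. Right
rules there meet invertible left rules, except for `→`, where one inducts on the right premise.
-/

@[simp] theorem conjList_nil : conjList [] = .tr := rfl

@[simp] theorem conjList_cons (φ : PropForm) (Γ : List PropForm) :
    conjList (φ :: Γ) = φ.and (conjList Γ) := rfl

theorem vars_subset_conjList {γ : PropForm} {Γ : List PropForm} (h : γ ∈ Γ) :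
    γ.vars ⊆ (conjList Γ).vars := by
  induction Γ with
  | nil => cases h
  | cons φ Γ ih =>
    rcases List.mem_cons.1 h with rfl | h
    · exact Finset.subset_union_left
    · exact (ih h).trans Finset.subset_union_right

theorem conjList_vars_cons_subset {γ φ : PropForm} {Γ : List PropForm} (hγ : γ ∈ Γ)
    (hφ : φ.vars ⊆ γ.vars) : (conjList (φ :: Γ)).vars ⊆ (conjList Γ).vars :=
  Finset.union_subset (hφ.trans (vars_subset_conjList hγ)) subset_rfl

theorem PropForm.IsMonotone.of_mem_conjList {γ : PropForm} {Γ : List PropForm}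
    (hΓ : (conjList Γ).IsMonotone) (h : γ ∈ Γ) : γ.IsMonotone := by
  induction Γ with
  | nil => cases h
  | cons φ Γ ih =>
    rcases List.mem_cons.1 h with rfl | h
    exacts [hΓ.1, ih hΓ.2 h]

/-- Cut-free sequent calculus `LJ` (in the style of G3ip). Left rules keep their principal
formula and contexts only matter up to membership, so weakening, contraction and exchange
are all the single lemma `LJ.mono`. -/
inductive LJ : List PropForm → PropForm → Prop
  | ax {Γ : List PropForm} {a : ℕ} : .var a ∈ Γ → LJ Γ (.var a)
  | botL {Γ : List PropForm} {δ : PropForm} : .fls ∈ Γ → LJ Γ δ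
  | topR {Γ : List PropForm} : LJ Γ .tr
  | andL {Γ : List PropForm} {δ φ χ : PropForm} : φ.and χ ∈ Γ → LJ (φ :: χ :: Γ) δ → LJ Γ δ
  | andR {Γ : List PropForm} {φ χ : PropForm} : LJ Γ φ → LJ Γ χ → LJ Γ (φ.and χ)
  | orL {Γ : List PropForm} {δ φ χ : PropForm} :
      φ.or χ ∈ Γ → LJ (φ :: Γ) δ → LJ (χ :: Γ) δ → LJ Γ δ
  | orR₁ {Γ : List PropForm} {φ χ : PropForm} : LJ Γ φ → LJ Γ (φ.or χ)
  | orR₂ {Γ : List PropForm} {φ χ : PropForm} : LJ Γ χ → LJ Γ (φ.or χ)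
  | impL {Γ : List PropForm} {δ φ χ : PropForm} :
      φ.imp χ ∈ Γ → LJ Γ φ → LJ (χ :: Γ) δ → LJ Γ δ
  | impR {Γ : List PropForm} {φ χ : PropForm} : LJ (φ :: Γ) χ → LJ Γ (φ.imp χ)

namespace LJ

variable {Γ Γ' Δ Δ' : List PropForm} {α δ φ χ : PropForm}

theorem mono (h : LJ Γ δ) (hΓ : Γ ⊆ Γ') : LJ Γ' δ := by
  induction h generalizing Γ' with
  | ax h => exact ax (hΓ h)
  | botL h => exact botL (hΓ h)
  | topR => exact topR
  | andL h _ ih => exact andL (hΓ h) (ih (by grind))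
  | andR _ _ ih₁ ih₂ => exact andR (ih₁ hΓ) (ih₂ hΓ)
  | orL h _ _ ih₁ ih₂ => exact orL (hΓ h) (ih₁ (by grind)) (ih₂ (by grind))
  | orR₁ _ ih => exact orR₁ (ih hΓ)
  | orR₂ _ ih => exact orR₂ (ih hΓ)
  | impL h _ _ ih₁ ih₂ => exact impL (hΓ h) (ih₁ hΓ) (ih₂ (by grind))
  | impR _ ih => exact impR (ih (by grind))

theorem of_mem (h : φ ∈ Γ) : LJ Γ φ := by
  induction φ generalizing Γ with
  | tr => exact topR
  | fls => exact botL h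
  | var a => exact ax h
  | and φ χ ih₁ ih₂ =>
    exact andR (andL h (ih₁ (by simp))) (andL h (ih₂ (by simp)))
  | or φ χ ih₁ ih₂ => exact orL h (orR₁ (ih₁ (by simp))) (orR₂ (ih₂ (by simp)))
  | imp φ χ ih₁ ih₂ => exact impR (impL (χ := χ) (by simp [h]) (ih₁ (by simp)) (ih₂ (by simp)))

theorem tr_inv (h : LJ Δ δ) (hΔ : Δ ⊆ .tr :: Γ) : LJ Γ δ := by
  induction h generalizing Γ with
  | ax h => exact ax (by simpa using hΔ h)
  | botL h => exact botL (by simpa using hΔ h)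
  | topR => exact topR
  | andL h _ ih => exact andL (by simpa using hΔ h) (ih (by grind))
  | andR _ _ ih₁ ih₂ => exact andR (ih₁ hΔ) (ih₂ hΔ)
  | orL h _ _ ih₁ ih₂ => exact orL (by simpa using hΔ h) (ih₁ (by grind)) (ih₂ (by grind))
  | orR₁ _ ih => exact orR₁ (ih hΔ)
  | orR₂ _ ih => exact orR₂ (ih hΔ)
  | impL h _ _ ih₁ ih₂ => exact impL (by simpa using hΔ h) (ih₁ hΔ) (ih₂ (by grind))
  | impR _ ih => exact impR (ih (by grind))

theorem and_inv (h : LJ Δ δ) (hΔ : Δ ⊆ φ.and χ :: Γ) : LJ (φ :: χ :: Γ) δ := by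
  induction h generalizing Γ with
  | ax h => exact ax (by grind)
  | botL h => exact botL (by grind)
  | topR => exact topR
  | @andL _ _ φ' χ' h _ ih =>
    have ih' := ih (Γ := φ' :: χ' :: Γ) (by grind)
    rcases List.mem_cons.1 (hΔ h) with heq | hmem
    · cases heq
      exact ih'.mono (by grind)
    · exact andL (φ := φ') (χ := χ') (by grind) (ih'.mono (by grind))
  | andR _ _ ih₁ ih₂ => exact andR (ih₁ hΔ) (ih₂ hΔ)
  | @orL _ _ φ' χ' h _ _ ih₁ ih₂ =>
    exact orL (φ := φ') (χ := χ') (by grind) ((ih₁ (Γ := φ' :: Γ) (by grind)).mono (by grind))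
      ((ih₂ (Γ := χ' :: Γ) (by grind)).mono (by grind))
  | orR₁ _ ih => exact orR₁ (ih hΔ)
  | orR₂ _ ih => exact orR₂ (ih hΔ)
  | @impL _ _ φ' χ' h _ _ ih₁ ih₂ =>
    exact impL (φ := φ') (χ := χ') (by grind) (ih₁ hΔ)
      ((ih₂ (Γ := χ' :: Γ) (by grind)).mono (by grind))
  | @impR _ φ' _ _ ih => exact impR ((ih (Γ := φ' :: Γ) (by grind)).mono (by grind))

theorem or_inv (h : LJ Δ δ) (hΔ : Δ ⊆ φ.or χ :: Γ) : LJ (φ :: Γ) δ ∧ LJ (χ :: Γ) δ := by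
  induction h generalizing Γ with
  | ax h => exact ⟨ax (by grind), ax (by grind)⟩
  | botL h => exact ⟨botL (by grind), botL (by grind)⟩
  | topR => exact ⟨topR, topR⟩
  | @andL _ _ φ' χ' h _ ih =>
    have ih' := ih (Γ := φ' :: χ' :: Γ) (by grind)
    exact ⟨andL (φ := φ') (χ := χ') (by grind) (ih'.1.mono (by grind)),
      andL (φ := φ') (χ := χ') (by grind) (ih'.2.mono (by grind))⟩
  | andR _ _ ih₁ ih₂ => exact ⟨andR (ih₁ hΔ).1 (ih₂ hΔ).1, andR (ih₁ hΔ).2 (ih₂ hΔ).2⟩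
  | @orL _ _ φ' χ' h _ _ ih₁ ih₂ =>
    have ih₁' := ih₁ (Γ := φ' :: Γ) (by grind)
    have ih₂' := ih₂ (Γ := χ' :: Γ) (by grind)
    rcases List.mem_cons.1 (hΔ h) with heq | hmem
    · cases heq
      exact ⟨ih₁'.1.mono (by grind), ih₂'.2.mono (by grind)⟩
    · exact ⟨orL (φ := φ') (χ := χ') (by grind) (ih₁'.1.mono (by grind))
          (ih₂'.1.mono (by grind)),
        orL (φ := φ') (χ := χ') (by grind) (ih₁'.2.mono (by grind)) (ih₂'.2.mono (by grind))⟩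
  | orR₁ _ ih => exact ⟨orR₁ (ih hΔ).1, orR₁ (ih hΔ).2⟩
  | orR₂ _ ih => exact ⟨orR₂ (ih hΔ).1, orR₂ (ih hΔ).2⟩
  | @impL _ _ φ' χ' h _ _ ih₁ ih₂ =>
    have ih₂' := ih₂ (Γ := χ' :: Γ) (by grind)
    exact ⟨impL (φ := φ') (χ := χ') (by grind) (ih₁ hΔ).1 (ih₂'.1.mono (by grind)),
      impL (φ := φ') (χ := χ') (by grind) (ih₁ hΔ).2 (ih₂'.2.mono (by grind))⟩
  | @impR _ φ' _ _ ih =>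
    have ih' := ih (Γ := φ' :: Γ) (by grind)
    exact ⟨impR (ih'.1.mono (by grind)), impR (ih'.2.mono (by grind))⟩

def CutAdmissible (α : PropForm) : Prop :=
  ∀ ⦃Γ Δ : List PropForm⦄ ⦃δ : PropForm⦄, LJ Γ α → LJ (α :: Δ) δ → LJ (Γ ++ Δ) δ

theorem cut_imp (hφ : CutAdmissible φ) (hχ : CutAdmissible χ) (hΓ : LJ (φ :: Γ) χ)
    (h : LJ Δ δ) (hΔ : Δ ⊆ φ.imp χ :: Δ') : LJ (Γ ++ Δ') δ := by
  induction h generalizing Δ' with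
  | ax h => exact ax (by grind)
  | botL h => exact botL (by grind)
  | topR => exact topR
  | @andL _ _ φ' χ' h _ ih =>
    exact andL (φ := φ') (χ := χ') (by grind)
      ((ih (Δ' := φ' :: χ' :: Δ') (by grind)).mono (by grind))
  | andR _ _ ih₁ ih₂ => exact andR (ih₁ hΔ) (ih₂ hΔ)
  | @orL _ _ φ' χ' h _ _ ih₁ ih₂ =>
    exact orL (φ := φ') (χ := χ') (by grind) ((ih₁ (Δ' := φ' :: Δ') (by grind)).mono (by grind))
      ((ih₂ (Δ' := χ' :: Δ') (by grind)).mono (by grind))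
  | orR₁ _ ih => exact orR₁ (ih hΔ)
  | orR₂ _ ih => exact orR₂ (ih hΔ)
  | @impL _ _ φ' χ' h _ _ ih₁ ih₂ =>
    have ih₂' := ih₂ (Δ' := χ' :: Δ') (by grind)
    rcases List.mem_cons.1 (hΔ h) with heq | hmem
    · cases heq
      have hχ' := hφ (ih₁ hΔ) hΓ
      exact (hχ hχ' (ih₂'.mono (Γ' := χ :: (Γ ++ Δ')) (by grind))).mono (by grind)
    · exact impL (φ := φ') (χ := χ') (by grind) (ih₁ hΔ) (ih₂'.mono (by grind))
  | @impR _ φ' _ _ ih => exact impR ((ih (Δ' := φ' :: Δ') (by grind)).mono (by grind))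

theorem cutAdmissible_of_lt (ih : ∀ β : PropForm, β.size < α.size → CutAdmissible β) :
    CutAdmissible α := by
  intro Γ Δ δ hl hr
  induction hl with
  | ax h => exact hr.mono (by grind)
  | botL h => exact botL (List.mem_append_left _ h)
  | topR => exact (hr.tr_inv (List.Subset.refl _)).mono (List.subset_append_right _ _)
  | andL h _ ihl => exact andL (List.mem_append_left _ h) (ihl ih hr)
  | @andR Γ φ χ hφ hχ =>
    have hsize : φ.size < (φ.and χ).size ∧ χ.size < (φ.and χ).size := by
      simp only [PropForm.size]; omega
    have h₁ := ih χ hsize.2 hχ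
      ((hr.and_inv (List.Subset.refl _)).mono (Γ' := χ :: φ :: Δ) (by grind))
    exact (ih φ hsize.1 hφ (h₁.mono (Γ' := φ :: (Γ ++ Δ)) (by grind))).mono (by grind)
  | orL h _ _ ih₁ ih₂ => exact orL (List.mem_append_left _ h) (ih₁ ih hr) (ih₂ ih hr)
  | @orR₁ _ φ _ hφ =>
    exact ih φ (by simp only [PropForm.size]; omega) hφ (hr.or_inv (List.Subset.refl _)).1
  | @orR₂ _ _ χ hχ =>
    exact ih χ (by simp only [PropForm.size]; omega) hχ (hr.or_inv (List.Subset.refl _)).2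
  | impL h hφ _ _ ih₂ =>
    exact impL (List.mem_append_left _ h) (hφ.mono (List.subset_append_left _ _)) (ih₂ ih hr)
  | @impR _ φ χ hφχ =>
    exact cut_imp (ih φ (by simp only [PropForm.size]; omega))
      (ih χ (by simp only [PropForm.size]; omega)) hφχ hr (List.Subset.refl _)

theorem cutAdmissible (α : PropForm) : CutAdmissible α :=
  cutAdmissible_of_lt fun β _ => cutAdmissible β
termination_by α.size

theorem cut (h₁ : LJ Γ α) (h₂ : LJ (α :: Δ) δ) : LJ (Γ ++ Δ) δ :=
  cutAdmissible α h₁ h₂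

theorem mp (h : LJ Γ (φ.imp χ)) (hφ : LJ Γ φ) : LJ Γ χ :=
  (h.cut (impL (List.mem_cons_self ..) (hφ.mono (List.subset_cons_self ..))
    (of_mem (List.mem_cons_self ..)))).mono (by simp)

theorem of_ipc (h : IPC φ) : LJ [] φ := by
  induction h with
  | mp _ _ ih₁ ih₂ => exact ih₁.mp ih₂
  | ax1 => exact .impR (.impR (.of_mem (by simp)))
  | ax2 φ ψ =>
    exact .impR (.impR (.impR (.mp (φ := ψ) (.mp (φ := φ) (.of_mem (by simp)) (.of_mem (by simp)))
      (.mp (φ := φ) (.of_mem (by simp)) (.of_mem (by simp))))))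
  | axAndI => exact .impR (.impR (.andR (.of_mem (by simp)) (.of_mem (by simp))))
  | axAndL φ ψ => exact .impR (.andL (φ := φ) (χ := ψ) (by simp) (.of_mem (by simp)))
  | axAndR φ ψ => exact .impR (.andL (φ := φ) (χ := ψ) (by simp) (.of_mem (by simp)))
  | axOrL => exact .impR (.orR₁ (.of_mem (by simp)))
  | axOrR => exact .impR (.orR₂ (.of_mem (by simp)))
  | axOrE φ ψ =>
    exact .impR (.impR (.impR (.orL (φ := φ) (χ := ψ) (by simp)
      (.mp (φ := φ) (.of_mem (by simp)) (.of_mem (by simp)))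
      (.mp (φ := ψ) (.of_mem (by simp)) (.of_mem (by simp))))))
  | axFls => exact .impR (.botL (by simp))
  | axTr => exact .topR

theorem conjList_self : LJ Γ (conjList Γ) := by
  induction Γ with
  | nil => exact topR
  | cons φ Γ ih => exact andR (of_mem (by simp)) (ih.mono (List.subset_cons_self _ _))

theorem conjList_cons_of_append (h : LJ (Γ ++ Δ) δ) : LJ (conjList Γ :: Δ) δ := by
  induction Γ generalizing Δ with
  | nil => exact h.mono (List.subset_cons_self _ _)
  | cons φ Γ ih =>
    have h' := ih (Δ := φ :: Δ) (h.mono (by grind))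
    exact andL (φ := φ) (χ := conjList Γ) (by simp) (h'.mono (by grind))

theorem singleton_conjList (h : LJ Γ δ) : LJ [conjList Γ] δ :=
  conjList_cons_of_append (by simpa using h)

theorem or_mono (h : LJ Γ (φ.or χ)) (hφ : LJ [φ] φ') (hχ : LJ [χ] χ') : LJ Γ (φ'.or χ') := by
  simpa using h.cut (Δ := [])
    (orL (φ := φ) (χ := χ) (by simp) (orR₁ (hφ.mono (by simp))) (orR₂ (hχ.mono (by simp))))

end LJ

theorem IPC.imp_self (φ : PropForm) : IPC (φ.imp φ) :=
  .mp (.mp (.ax2 φ (φ.imp φ) φ) (.ax1 φ (φ.imp φ))) (.ax1 φ φ)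

inductive IPCEntails (Γ : List PropForm) : PropForm → Prop
  | hyp {φ : PropForm} : φ ∈ Γ → IPCEntails Γ φ
  | thm {φ : PropForm} : IPC φ → IPCEntails Γ φ
  | mp {φ ψ : PropForm} : IPCEntails Γ (φ.imp ψ) → IPCEntails Γ φ → IPCEntails Γ ψ

namespace IPCEntails

variable {Γ : List PropForm} {φ ψ : PropForm}

theorem imp_intro (h : IPCEntails (φ :: Γ) ψ) : IPCEntails Γ (φ.imp ψ) := by
  induction h with
  | hyp h =>
    rcases List.mem_cons.1 h with rfl | h
    · exact thm (IPC.imp_self _)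
    · exact mp (thm (.ax1 _ _)) (hyp h)
  | thm h => exact mp (thm (.ax1 _ _)) (thm h)
  | mp _ _ ih₁ ih₂ => exact mp (mp (thm (.ax2 _ _ _)) ih₁) ih₂

theorem ipc_of_nil (h : IPCEntails [] φ) : IPC φ := by
  induction h with
  | hyp h => cases h
  | thm h => exact h
  | mp _ _ ih₁ ih₂ => exact .mp ih₁ ih₂

end IPCEntails

theorem LJ.sound {Γ : List PropForm} {δ : PropForm} (h : LJ Γ δ) : IPCEntails Γ δ := by
  induction h with
  | ax h => exact .hyp h
  | botL h => exact .mp (.thm (.axFls _)) (.hyp h)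
  | topR => exact .thm .axTr
  | @andL _ _ φ χ h _ ih =>
    exact .mp (.mp ih.imp_intro.imp_intro (.mp (.thm (.axAndR φ χ)) (.hyp h)))
      (.mp (.thm (.axAndL φ χ)) (.hyp h))
  | andR _ _ ih₁ ih₂ => exact .mp (.mp (.thm (.axAndI _ _)) ih₁) ih₂
  | orL h _ _ ih₁ ih₂ =>
    exact .mp (.mp (.mp (.thm (.axOrE _ _ _)) ih₁.imp_intro) ih₂.imp_intro) (.hyp h)
  | orR₁ _ ih => exact .mp (.thm (.axOrL _ _)) ih
  | orR₂ _ ih => exact .mp (.thm (.axOrR _ _)) ih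
  | impL h _ _ ih₁ ih₂ => exact .mp ih₂.imp_intro (.mp (.hyp h) ih₁)
  | impR _ ih => exact ih.imp_intro

theorem LJ.ipc_imp {φ χ : PropForm} (h : LJ [φ] χ) : IPC (φ.imp χ) :=
  h.sound.imp_intro.ipc_of_nil

structure IsDisjInterpolant (Γ : List PropForm) (ψ θ I J : PropForm) : Prop where
  vars_left : I.vars ⊆ (conjList Γ).vars
  vars_right : J.vars ⊆ (conjList Γ).vars
  derives_or : LJ Γ (I.or J)
  left : LJ [I] ψ
  right : LJ [J] θ
  isMonotone : (conjList Γ).IsMonotone → I.IsMonotone ∧ J.IsMonotone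

namespace IsDisjInterpolant

variable {Γ : List PropForm} {ψ θ I J I₁ J₁ I₂ J₂ φ χ : PropForm}

theorem of_fls_mem (h : .fls ∈ Γ) : IsDisjInterpolant Γ ψ θ .fls .fls :=
  ⟨by simp [PropForm.vars], by simp [PropForm.vars], .botL h, .botL (by simp), .botL (by simp),
    fun _ => ⟨trivial, trivial⟩⟩

theorem of_left (h : LJ Γ ψ) : IsDisjInterpolant Γ ψ θ (conjList Γ) .fls :=
  ⟨subset_rfl, by simp [PropForm.vars], .orR₁ .conjList_self, h.singleton_conjList,
    .botL (by simp), fun hΓ => ⟨hΓ, trivial⟩⟩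

theorem of_right (h : LJ Γ θ) : IsDisjInterpolant Γ ψ θ .fls (conjList Γ) :=
  ⟨by simp [PropForm.vars], subset_rfl, .orR₂ .conjList_self, .botL (by simp),
    h.singleton_conjList, fun hΓ => ⟨trivial, hΓ⟩⟩

theorem of_and_mem (hmem : φ.and χ ∈ Γ) (h : IsDisjInterpolant (φ :: χ :: Γ) ψ θ I J) :
    IsDisjInterpolant Γ ψ θ I J := by
  have hvars : (conjList (φ :: χ :: Γ)).vars ⊆ (conjList Γ).vars :=
    (conjList_vars_cons_subset (List.mem_cons_of_mem _ hmem) Finset.subset_union_left).trans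
      (conjList_vars_cons_subset hmem Finset.subset_union_right)
  exact ⟨h.vars_left.trans hvars, h.vars_right.trans hvars, .andL hmem h.derives_or, h.left,
    h.right, fun hΓ => h.isMonotone ⟨(hΓ.of_mem_conjList hmem).1, (hΓ.of_mem_conjList hmem).2, hΓ⟩⟩

theorem of_imp_mem (hmem : φ.imp χ ∈ Γ) (hφ : LJ Γ φ) (h : IsDisjInterpolant (χ :: Γ) ψ θ I J) :
    IsDisjInterpolant Γ ψ θ I J := by
  have hvars := conjList_vars_cons_subset hmem Finset.subset_union_right
  exact ⟨h.vars_left.trans hvars, h.vars_right.trans hvars, .impL hmem hφ h.derives_or, h.left,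
    h.right, fun hΓ => (hΓ.of_mem_conjList hmem).elim⟩

theorem of_or_mem (hmem : φ.or χ ∈ Γ) (h₁ : IsDisjInterpolant (φ :: Γ) ψ θ I₁ J₁)
    (h₂ : IsDisjInterpolant (χ :: Γ) ψ θ I₂ J₂) :
    IsDisjInterpolant Γ ψ θ (I₁.or I₂) (J₁.or J₂) := by
  have hvars₁ := conjList_vars_cons_subset hmem Finset.subset_union_left
  have hvars₂ := conjList_vars_cons_subset hmem Finset.subset_union_right
  refine ⟨Finset.union_subset (h₁.vars_left.trans hvars₁) (h₂.vars_left.trans hvars₂),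
    Finset.union_subset (h₁.vars_right.trans hvars₁) (h₂.vars_right.trans hvars₂),
    .orL hmem (h₁.derives_or.or_mono (.orR₁ (.of_mem (by simp))) (.orR₁ (.of_mem (by simp))))
      (h₂.derives_or.or_mono (.orR₂ (.of_mem (by simp))) (.orR₂ (.of_mem (by simp)))),
    .orL (φ := I₁) (χ := I₂) (by simp) (h₁.left.mono (by simp)) (h₂.left.mono (by simp)),
    .orL (φ := J₁) (χ := J₂) (by simp) (h₁.right.mono (by simp)) (h₂.right.mono (by simp)),
    fun hΓ => ?_⟩
  obtain ⟨hφ, hχ⟩ := hΓ.of_mem_conjList hmem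
  obtain ⟨hI₁, hJ₁⟩ := h₁.isMonotone ⟨hφ, hΓ⟩
  obtain ⟨hI₂, hJ₂⟩ := h₂.isMonotone ⟨hχ, hΓ⟩
  exact ⟨⟨hI₁, hI₂⟩, hJ₁, hJ₂⟩

end IsDisjInterpolant

theorem LJ.exists_isDisjInterpolant {Γ : List PropForm} {ψ θ : PropForm} (h : LJ Γ (ψ.or θ)) :
    ∃ I J, IsDisjInterpolant Γ ψ θ I J := by
  generalize hδ : ψ.or θ = δ at h
  induction h with
  | ax | topR | andR | impR => cases hδ
  | botL h => exact ⟨_, _, .of_fls_mem h⟩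
  | andL h _ ih =>
    obtain ⟨I, J, hIJ⟩ := ih hδ
    exact ⟨I, J, hIJ.of_and_mem h⟩
  | orL h _ _ ih₁ ih₂ =>
    obtain ⟨I₁, J₁, h₁⟩ := ih₁ hδ
    obtain ⟨I₂, J₂, h₂⟩ := ih₂ hδ
    exact ⟨_, _, .of_or_mem h h₁ h₂⟩
  | orR₁ h => cases hδ; exact ⟨_, _, .of_left h⟩
  | orR₂ h => cases hδ; exact ⟨_, _, .of_right h⟩
  | impL h hφ _ _ ih =>
    obtain ⟨I, J, hIJ⟩ := ih hδ
    exact ⟨I, J, hIJ.of_imp_mem h hφ⟩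

/-- `IPC` has the (monotone) propositional disjunctive
interpolation property: from `IPC ⊢ φ → ψ ∨ θ` one gets `I, J` with variables
among those of `φ` such that `φ → I ∨ J`, `I → ψ` and `J → θ` are provable in
`IPC`; if `φ` is monotone, `I` and `J` can moreover be chosen monotone. -/
theorem IPC_disjunctive_interpolation (φ ψ θ : PropForm)
    (h : IPC (φ.imp (ψ.or θ))) :
    (∃ I J : PropForm, I.vars ⊆ φ.vars ∧ J.vars ⊆ φ.vars ∧
      IPC (φ.imp (I.or J)) ∧ IPC (I.imp ψ) ∧ IPC (J.imp θ)) ∧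
    (φ.IsMonotone →
      ∃ I J : PropForm, I.vars ⊆ φ.vars ∧ J.vars ⊆ φ.vars ∧
        I.IsMonotone ∧ J.IsMonotone ∧
        IPC (φ.imp (I.or J)) ∧ IPC (I.imp ψ) ∧ IPC (J.imp θ)) := by
  have hseq : LJ [φ] (ψ.or θ) :=
    ((LJ.of_ipc h).mono (List.nil_subset _)).mp (.of_mem (List.mem_singleton_self φ))
  obtain ⟨I, J, hI, hJ, hIJ, hIψ, hJθ, hmono⟩ := hseq.exists_isDisjInterpolant
  simp only [conjList_cons, conjList_nil, PropForm.vars, Finset.union_empty] at hI hJ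
  refine ⟨⟨I, J, hI, hJ, hIJ.ipc_imp, hIψ.ipc_imp, hJθ.ipc_imp⟩, fun hφ => ?_⟩
  obtain ⟨hmI, hmJ⟩ := hmono ⟨hφ, trivial⟩
  exact ⟨I, J, hI, hJ, hmI, hmJ, hIJ.ipc_imp, hIψ.ipc_imp, hJθ.ipc_imp⟩
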